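/- Let g be the 2-dimensional Lie algebra with [X₁,X₂] = X₁, graded by V₀ = span{X₂}, V₁ = span{X₁}. Using the semigroup S_N2 (λ1λ1=λ2, λ1λ2=λ3, all products of total degree ≥ 4 equal λ4) with resonant decomposition S₀={λ2,λ4}, S₁={λ1,λ3,λ4}, the 0_S-reduced resonant subalgebra has basis Y₁=λ3⊗X₁, Y₂=λ1⊗X₁, Y₃=λ2⊗X₂ with [Y₁,Y₂]=[Y₁,Y₃]=0 and [Y₂,Y₃]=Y₁, i.e., it is isomorphic to the Bianchi type II (Heisenberg) algebra. -/
import Mathlib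


/-- The multiplication table of the semigroup `S_N2` on `{λ1,...,λ4}`, encoded
with `λ_{i+1} ↔ (i : Fin 4)`: `λiλj = λ_{i+j}` if `i+j ≤ 3`, else `λ4`. -/
def mulSN2 : Fin 4 → Fin 4 → Fin 4 :=
  ![![1, 2, 3, 3],
    ![2, 3, 3, 3],
    ![3, 3, 3, 3],
    ![3, 3, 3, 3]]

/-- The bracket of the expanded algebra on `Fin 4 → g` associated to an explicit
multiplication table `mul`. -/
def exBr (mul : Fin 4 → Fin 4 → Fin 4) {g : Type*} [LieRing g]
    (f₁ f₂ : Fin 4 → g) : Fin 4 → g :=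
  fun γ => ∑ p : Fin 4 × Fin 4, if mul p.1 p.2 = γ then ⁅f₁ p.1, f₂ p.2⁆ else 0

/-- The basis element `λ ⊗ x`, as the function supported at `λ`. -/
def basE {S : Type*} [DecidableEq S] {g : Type*} [Zero g] (l : S) (x : g) : S → g :=
  fun μ => if μ = l then x else 0

/-- Let `g` be the 2-dimensional Lie algebra with `[X₁,X₂] = X₁`, graded by
`V₀ = span{X₂}`, `V₁ = span{X₁}`.  Using the semigroup `S_N2` with resonant
decomposition `S₀ = {λ2,λ4}`, `S₁ = {λ1,λ3,λ4}`, the `0_S`-reduced resonant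
subalgebra has basis `Y₁ = λ3⊗X₁`, `Y₂ = λ1⊗X₁`, `Y₃ = λ2⊗X₂` with
`[Y₁,Y₂] = [Y₁,Y₃] = 0` and `[Y₂,Y₃] = Y₁`, i.e. it is (isomorphic to) the
Bianchi type II (Heisenberg) algebra. -/
theorem stmt8 (K : Type*) [Field K] (g : Type*) [LieRing g] [LieAlgebra K g]
    (X₁ X₂ : g) (hli : LinearIndependent K ![X₁, X₂])
    (hspan : Submodule.span K {X₁, X₂} = ⊤)
    (hbr : ⁅X₁, X₂⁆ = X₁) :
    let Y₁ : Fin 4 → g := basE 2 X₁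
    let Y₂ : Fin 4 → g := basE 0 X₁
    let Y₃ : Fin 4 → g := basE 1 X₂
    -- the ideal `λ4 ⊗ g` giving the `0_S`-reduction
    let I : Submodule K (Fin 4 → g) :=
      Submodule.span K {f | ∃ x : g, f = basE 3 x}
    -- the resonant subalgebra `(S₀ × V₀) ⊕ (S₁ × V₁)`
    let R : Submodule K (Fin 4 → g) :=
      Submodule.span K {basE 1 X₂, basE 3 X₂, basE 0 X₁, basE 2 X₁, basE 3 X₁}
    (exBr mulSN2 Y₁ Y₂ ∈ I) ∧
    (exBr mulSN2 Y₁ Y₃ ∈ I) ∧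
    (exBr mulSN2 Y₂ Y₃ - Y₁ ∈ I) ∧
    LinearIndependent K ![I.mkQ Y₁, I.mkQ Y₂, I.mkQ Y₃] ∧
    Submodule.span K {I.mkQ Y₁, I.mkQ Y₂, I.mkQ Y₃} = R.map I.mkQ := by

  intro Y₁ Y₂ Y₃ I R
  have hX₁ : X₁ ≠ 0 := by simpa using hli.ne_zero 0
  have hX₂ : X₂ ≠ 0 := by simpa using hli.ne_zero 1
  have hIgen : ∀ x : g, basE (3 : Fin 4) x ∈ I := fun x =>
    Submodule.subset_span ⟨x, rfl⟩
  have hIval : ∀ (μ : Fin 4), μ ≠ 3 → ∀ f ∈ I, f μ = 0 := by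
    intro μ hμ f hf
    have hle : I ≤ LinearMap.ker (LinearMap.proj μ : (Fin 4 → g) →ₗ[K] g) := by
      rw [Submodule.span_le]
      rintro _ ⟨x, rfl⟩
      simp [LinearMap.mem_ker, basE, hμ]
    exact hle hf
  have h12 : exBr mulSN2 Y₁ Y₂ = 0 := by
    funext γ
    refine Finset.sum_eq_zero fun p _ => ?_
    rcases p with ⟨a, b⟩
    fin_cases a <;> fin_cases b <;>
      simp [Y₁, Y₂, basE]
  have h13 : exBr mulSN2 Y₁ Y₃ = basE 3 X₁ := by
    funext γ
    simp [exBr, Y₁, Y₃, basE, Fintype.sum_prod_type, Fin.sum_univ_four, mulSN2, hbr, eq_comm, Matrix.vecHead, Matrix.vecTail]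
  have h23 : exBr mulSN2 Y₂ Y₃ = Y₁ := by
    funext γ
    simp [exBr, Y₁, Y₂, Y₃, basE, Fintype.sum_prod_type, Fin.sum_univ_four, mulSN2, hbr, eq_comm]
  refine ⟨by rw [h12]; exact I.zero_mem, by rw [h13]; exact hIgen X₁,
    by rw [h23, sub_self]; exact I.zero_mem, ?_, ?_⟩
  · rw [Fintype.linearIndependent_iff]
    intro c hc
    have hm : (c 0 • Y₁ + c 1 • Y₂ + c 2 • Y₃) ∈ I := by
      have : I.mkQ (c 0 • Y₁ + c 1 • Y₂ + c 2 • Y₃) = 0 := by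
        rw [map_add, map_add, map_smul, map_smul, map_smul]
        simpa [Fin.sum_univ_three] using hc
      rwa [Submodule.mkQ_apply, Submodule.Quotient.mk_eq_zero] at this
    have e2 := hIval 2 (by decide) _ hm
    have e0 := hIval 0 (by decide) _ hm
    have e1 := hIval 1 (by decide) _ hm
    simp [Y₁, Y₂, Y₃, basE] at e0 e1 e2
    have hc0 : c 0 = 0 := by
      rcases e2 with h | h
      · exact h
      · exact absurd h hX₁
    have hc1 : c 1 = 0 := by
      rcases e0 with h | h
      · exact h
      · exact absurd h hX₁
    have hc2 : c 2 = 0 := by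
      rcases e1 with h | h
      · exact h
      · exact absurd h hX₂
    intro i
    fin_cases i <;> assumption
  · apply le_antisymm
    · rw [Submodule.span_le]
      rintro y hy
      simp only [Set.mem_insert_iff, Set.mem_singleton_iff] at hy
      rcases hy with rfl | rfl | rfl
      · exact Submodule.mem_map_of_mem (Submodule.subset_span (by simp [Y₁]))
      · exact Submodule.mem_map_of_mem (Submodule.subset_span (by simp [Y₂]))
      · exact Submodule.mem_map_of_mem (Submodule.subset_span (by simp [Y₃]))
    · rw [Submodule.map_span, Submodule.span_le]
      rintro _ ⟨f, hf, rfl⟩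
      simp only [Set.mem_insert_iff, Set.mem_singleton_iff] at hf
      have hz : ∀ x : g, I.mkQ (basE (3 : Fin 4) x) = 0 := by
        intro x
        rw [Submodule.mkQ_apply, Submodule.Quotient.mk_eq_zero]
        exact hIgen x
      rcases hf with rfl | rfl | rfl | rfl | rfl
      · exact Submodule.subset_span (by simp [Y₃])
      · rw [hz]; exact Submodule.zero_mem _
      · exact Submodule.subset_span (by simp [Y₂])
      · exact Submodule.subset_span (by simp [Y₁])
      · rw [hz]; exact Submodule.zero_mem _
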